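/- arXiv:1012.4754 — 10 statements merged into one kernel-verified Lean document; each statement's English description precedes it below -/
import Mathlib

section
/- For strictly positive real numbers λ₁,…,λₙ, the matrix T with entries T_ij = (log λ_i − log λ_j)/(λ_i − λ_j) for λ_i ≠ λ_j and T_ii = 1/λ_i is positive semidefinite. -/
/-!
For `a, b > 0` one has `∫₀^∞ ds / ((s + a) (s + b)) = (log a - log b) / (a - b)`, and `= 1 / a`
when `a = b`. Hence `T` is the Gram matrix of the functions `s ↦ (s + λᵢ)⁻¹` in `L²(0, ∞)`.
-/

open MeasureTheory Set Filter Real Topology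

theorem Matrix.posSemidef_of_eq_integral_mul {ι α : Type*} [Finite ι] [MeasurableSpace α]
    {μ : Measure α} {M : Matrix ι ι ℝ} (f : ι → α → ℝ) (hf : ∀ i, MemLp (f i) 2 μ)
    (hM : ∀ i j, M i j = ∫ x, f i x * f j x ∂μ) : M.PosSemidef := by
  have hgram : M = Matrix.gram ℝ fun i => (hf i).toLp (f i) := by
    ext i j
    rw [hM, Matrix.gram_apply, L2.inner_def]
    refine integral_congr_ae ?_
    filter_upwards [(hf i).coeFn_toLp, (hf j).coeFn_toLp] with x hi hj
    simp [hi, hj, mul_comm]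
  exact hgram ▸ Matrix.posSemidef_gram ℝ _

/-- The reciprocal of the logarithmic mean, with its continuous extension `1 / a` on the
diagonal. -/
noncomputable def invLogMean (a b : ℝ) : ℝ :=
  if a = b then 1 / a else (log a - log b) / (a - b)

lemma hasDerivAt_neg_inv_add {a x : ℝ} (h : x + a ≠ 0) :
    HasDerivAt (fun s => -(s + a)⁻¹) ((x + a)⁻¹ * (x + a)⁻¹) x := by
  refine (((hasDerivAt_id' x).add_const a).inv h).neg.congr_deriv ?_
  field_simp

lemma hasDerivAt_log_add_sub_log_add_div {a b x : ℝ} (hab : a ≠ b) (ha : x + a ≠ 0)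
    (hb : x + b ≠ 0) :
    HasDerivAt (fun s => (log (s + a) - log (s + b)) / (b - a)) ((x + a)⁻¹ * (x + b)⁻¹) x := by
  have hlog {c : ℝ} (hc : x + c ≠ 0) : HasDerivAt (fun s => log (s + c)) (x + c)⁻¹ x := by
    simpa using ((hasDerivAt_id x).add_const c).log hc
  refine ((hlog ha).sub (hlog hb)).div_const (b - a) |>.congr_deriv ?_
  have : b - a ≠ 0 := sub_ne_zero.mpr hab.symm
  field_simp
  ring

lemma tendsto_log_add_sub_log_add (a b : ℝ) :
    Tendsto (fun s => log (s + a) - log (s + b)) atTop (𝓝 0) := by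
  simpa using (tendsto_log_comp_add_sub_log a).sub (tendsto_log_comp_add_sub_log b)

lemma tendsto_neg_inv_add_atTop (a : ℝ) : Tendsto (fun s => -(s + a)⁻¹) atTop (𝓝 0) := by
  simpa using (tendsto_atTop_add_const_right _ a tendsto_id).inv_tendsto_atTop.neg

lemma integrableOn_Ioi_inv_add_mul_self {a : ℝ} (ha : 0 < a) :
    IntegrableOn (fun s => (s + a)⁻¹ * (s + a)⁻¹) (Ioi 0) :=
  integrableOn_Ioi_deriv_of_nonneg' (fun x (hx : 0 ≤ x) => hasDerivAt_neg_inv_add (by positivity))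
    (fun x _ => mul_self_nonneg _) (tendsto_neg_inv_add_atTop a)

lemma memLp_two_inv_add {a : ℝ} (ha : 0 < a) :
    MemLp (fun s => (s + a)⁻¹) 2 (volume.restrict (Ioi 0)) := by
  rw [memLp_two_iff_integrable_sq (by fun_prop)]
  simp only [sq]
  exact integrableOn_Ioi_inv_add_mul_self ha

lemma integral_Ioi_inv_add_mul_inv_add {a b : ℝ} (ha : 0 < a) (hb : 0 < b) :
    ∫ s in Ioi 0, (s + a)⁻¹ * (s + b)⁻¹ = invLogMean a b := by
  have hnonneg : ∀ x ∈ Ioi (0 : ℝ), 0 ≤ (x + a)⁻¹ * (x + b)⁻¹ := fun x (hx : 0 < x) => by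
    positivity
  unfold invLogMean
  split_ifs with hab
  · subst hab
    rw [integral_Ioi_of_hasDerivAt_of_nonneg'
      (fun x (hx : 0 ≤ x) => hasDerivAt_neg_inv_add (by positivity)) hnonneg
      (tendsto_neg_inv_add_atTop a)]
    simp
  · have hlim : Tendsto (fun s => (log (s + a) - log (s + b)) / (b - a)) atTop (𝓝 0) := by
      simpa using (tendsto_log_add_sub_log_add a b).div_const (b - a)
    rw [integral_Ioi_of_hasDerivAt_of_nonneg' (fun x (hx : 0 ≤ x) =>
      hasDerivAt_log_add_sub_log_add_div hab (by positivity) (by positivity)) hnonneg hlim,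
      zero_sub, zero_add, zero_add, ← div_neg, neg_sub]

theorem stmt_3 (n : ℕ) (lam : Fin n → ℝ) (hlam : ∀ i, 0 < lam i) :
    Matrix.PosSemidef (Matrix.of fun i j : Fin n =>
      if lam i = lam j then 1 / lam i
      else (Real.log (lam i) - Real.log (lam j)) / (lam i - lam j)) :=
  Matrix.posSemidef_of_eq_integral_mul _ (fun i => memLp_two_inv_add (hlam i))
    fun i j => (integral_Ioi_inv_add_mul_inv_add (hlam i) (hlam j)).symm
end

section
/- For 0 < t < 1 and strictly positive reals λ₁,…,λₙ, the matrix T with entries T_ij = 2/(λ_i^t λ_j^{1-t} + λ_i^{1-t} λ_j^t) is positive semidefinite. -/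
/-!
With `μᵢ = λᵢ ^ (1 - 2t)` the entries factor as
`2 / (λᵢ^t λⱼ^(1-t) + λᵢ^(1-t) λⱼ^t) = λᵢ^(-t) · 2 / (μᵢ + μⱼ) · λⱼ^(-t)`,
so `T` is congruent, through a diagonal matrix, to a multiple of the Cauchy matrix `1 / (μᵢ + μⱼ)`.
That matrix is positive semidefinite, being the Gram matrix of the functions `s ↦ exp (-μᵢ s)`
in `L²(0, ∞)`.
-/

open MeasureTheory Real Set

lemma integral_exp_neg_mul_Ioi_zero {r : ℝ} (hr : 0 < r) :
    ∫ s in Ioi (0 : ℝ), exp (-(r * s)) = r⁻¹ := by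
  simpa [neg_mul, div_neg, neg_div] using integral_exp_mul_Ioi (a := -r) (by linarith) 0

lemma memLp_two_exp_neg_mul_Ioi {r : ℝ} (hr : 0 < r) :
    MemLp (fun s => exp (-(r * s))) 2 (volume.restrict (Ioi 0)) := by
  refine (memLp_two_iff_integrable_sq (by fun_prop)).2 ?_
  have := exp_neg_integrableOn_Ioi 0 (by positivity : 0 < 2 * r)
  simp_rw [← exp_nat_mul]
  simpa [mul_neg, ← mul_assoc, neg_mul] using this.integrable

namespace Matrix

theorem posSemidef_cauchy {ι : Type*} [Finite ι] (μ : ι → ℝ) (hμ : ∀ i, 0 < μ i) :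
    (of fun i j => (μ i + μ j)⁻¹).PosSemidef := by
  let f (i : ι) : Lp ℝ 2 (volume.restrict (Ioi (0 : ℝ))) :=
    (memLp_two_exp_neg_mul_Ioi (hμ i)).toLp
  suffices of (fun i j => (μ i + μ j)⁻¹) = gram ℝ f from this ▸ posSemidef_gram ℝ f
  ext i j
  rw [of_apply, gram_apply, L2.inner_def, ← integral_exp_neg_mul_Ioi_zero (add_pos (hμ i) (hμ j))]
  refine integral_congr_ae ?_
  filter_upwards [MemLp.coeFn_toLp (memLp_two_exp_neg_mul_Ioi (hμ i)),
    MemLp.coeFn_toLp (memLp_two_exp_neg_mul_Ioi (hμ j))] with s hi hj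
  simp only [f, hi, hj, inner_apply, ← exp_add]
  ring_nf

lemma PosSemidef.diagonal_mul_mul_diagonal {ι : Type*} [Fintype ι] [DecidableEq ι]
    {A : Matrix ι ι ℝ} (hA : A.PosSemidef) (d : ι → ℝ) :
    (of fun i j => d i * A i j * d j).PosSemidef := by
  convert hA.mul_mul_conjTranspose_same (diagonal d) using 1
  ext i j
  simp [diagonal_mul, mul_diagonal]

end Matrix

lemma heinz_sum_eq_mul {a b : ℝ} (ha : 0 < a) (hb : 0 < b) (t : ℝ) :
    a ^ t * b ^ (1 - t) + a ^ (1 - t) * b ^ t =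
      a ^ t * b ^ t * (a ^ (1 - 2 * t) + b ^ (1 - 2 * t)) := by
  have hsplit {c : ℝ} (hc : 0 < c) : c ^ (1 - t) = c ^ t * c ^ (1 - 2 * t) := by
    rw [← rpow_add hc]; ring_nf
  rw [hsplit ha, hsplit hb]; ring

lemma two_div_heinz_sum_eq {a b : ℝ} (ha : 0 < a) (hb : 0 < b) (t : ℝ) :
    2 / (a ^ t * b ^ (1 - t) + a ^ (1 - t) * b ^ t) =
      a ^ (-t) * (2 * (a ^ (1 - 2 * t) + b ^ (1 - 2 * t))⁻¹) * b ^ (-t) := by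
  rw [heinz_sum_eq_mul ha hb, rpow_neg ha.le, rpow_neg hb.le]
  field_simp

theorem stmt_4_general (t : ℝ)
    (n : ℕ) (lam : Fin n → ℝ) (hlam : ∀ i, 0 < lam i) :
    Matrix.PosSemidef (Matrix.of fun i j : Fin n =>
      2 / (lam i ^ t * lam j ^ (1 - t) + lam i ^ (1 - t) * lam j ^ t)) := by
  have hcauchy := Matrix.posSemidef_cauchy (fun i => lam i ^ (1 - 2 * t))
    fun i => rpow_pos_of_pos (hlam i) _
  convert (hcauchy.smul (zero_le_two (α := ℝ))).diagonal_mul_mul_diagonal (fun i => lam i ^ (-t)) using 1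
  ext i j
  simp [two_div_heinz_sum_eq (hlam i) (hlam j)]

theorem stmt_4 (t : ℝ) (ht : 0 < t) (ht1 : t < 1)
    (n : ℕ) (lam : Fin n → ℝ) (hlam : ∀ i, 0 < lam i) :
    Matrix.PosSemidef (Matrix.of fun i j : Fin n =>
      2 / (lam i ^ t * lam j ^ (1 - t) + lam i ^ (1 - t) * lam j ^ t)) :=
  stmt_4_general t n lam hlam
end

section
/- For 0 < t < 1/2 and strictly positive reals λ₁,…,λₙ, the matrix T with entries T_ij = 2^{1-2t} (λ_i + λ_j)^{-(1-2t)} (λ_i λ_j)^{-t} is positive semidefinite. -/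
open MeasureTheory Real Set ComplexConjugate
open scoped ComplexOrder

/-!
With `s = 1 - 2t > 0`, the Gamma integral gives
`(λᵢ + λⱼ)^(-s) = Γ(s)⁻¹ ∫₀^∞ u^(s-1) e^(-λᵢ u) e^(-λⱼ u) du`,
so `C = ((λᵢ + λⱼ)^(-s))ᵢⱼ` is a positive multiple of the Gram matrix of the functions
`u ↦ u^((s-1)/2) e^(-λᵢ u)` in `L²(0, ∞)`, hence positive semidefinite. The matrix `T` is
`2^s D C D` with `D = diag(λᵢ^(-t))`.
-/

theorem Matrix.posSemidef_integral_conj_mul {𝕜 α ι : Type*} [RCLike 𝕜] [Finite ι]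
    [MeasurableSpace α] {μ : Measure α} {f : ι → α → 𝕜} (hf : ∀ i, MemLp (f i) 2 μ) :
    (Matrix.of fun i j => ∫ x, conj (f i x) * f j x ∂μ).PosSemidef := by
  convert Matrix.posSemidef_gram 𝕜 fun i => (hf i).toLp (f i) using 1
  ext i j
  rw [Matrix.gram_apply, L2.inner_def]
  refine integral_congr_ae ?_
  filter_upwards [(hf i).coeFn_toLp, (hf j).coeFn_toLp] with x hi hj
  simp [hi, hj, mul_comm]

theorem Real.rpow_neg_eq_integral {s r : ℝ} (hs : 0 < s) (hr : 0 < r) :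
    r ^ (-s) = (Gamma s)⁻¹ * ∫ u in Ioi 0, u ^ (s - 1) * exp (-(r * u)) := by
  rw [integral_rpow_mul_exp_neg_mul_Ioi hs hr, one_div, inv_rpow hr.le, ← rpow_neg hr.le,
    mul_comm (r ^ (-s)), inv_mul_cancel_left₀ (Gamma_pos_of_pos hs).ne']

theorem Matrix.posSemidef_rpow_neg_add {ι : Type*} [Finite ι] {s : ℝ} (hs : 0 < s)
    {a : ι → ℝ} (ha : ∀ i, 0 < a i) :
    (Matrix.of fun i j => (a i + a j) ^ (-s)).PosSemidef := by
  set f : ι → ℝ → ℝ := fun i u => u ^ ((s - 1) / 2) * exp (-(a i * u))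
  have hf_mul : ∀ i j, ∀ u ∈ Ioi (0 : ℝ),
      f i u * f j u = u ^ (s - 1) * exp (-((a i + a j) * u)) := by
    intro i j u hu
    have hhalf : u ^ ((s - 1) / 2) * u ^ ((s - 1) / 2) = u ^ (s - 1) := by
      rw [← rpow_add hu]; ring_nf
    simp only [f]
    rw [← hhalf, add_mul, neg_add, exp_add]
    ring
  have hf : ∀ i, MemLp (f i) 2 (volume.restrict (Ioi 0)) := by
    intro i
    refine (memLp_two_iff_integrable_sq (by fun_prop)).2 ?_
    have h := integrableOn_rpow_mul_exp_neg_mul_rpow (by linarith : (-1 : ℝ) < s - 1)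
      zero_lt_one (by linarith [ha i] : 0 < a i + a i)
    refine (h.congr_fun (fun u hu => ?_) measurableSet_Ioi)
    simp only [rpow_one, sq, hf_mul i i u hu, neg_mul]
  have hentry : ∀ i j, (a i + a j) ^ (-s) = (Gamma s)⁻¹ * ∫ u in Ioi 0, f i u * f j u := by
    intro i j
    rw [rpow_neg_eq_integral hs (by linarith [ha i, ha j] : 0 < a i + a j),
      setIntegral_congr_fun measurableSet_Ioi (hf_mul i j)]
  have hgram : (Matrix.of fun i j => ∫ u in Ioi 0, f i u * f j u).PosSemidef := by
    simpa using Matrix.posSemidef_integral_conj_mul hf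
  convert hgram.smul (inv_nonneg.2 (Gamma_pos_of_pos hs).le) using 1
  ext i j
  exact hentry i j

theorem stmt_7_general (t : ℝ) (ht1 : t < 1 / 2)
    (n : ℕ) (lam : Fin n → ℝ) (hlam : ∀ i, 0 < lam i) :
    Matrix.PosSemidef (Matrix.of fun i j : Fin n =>
      (2 : ℝ) ^ (1 - 2 * t) * (lam i + lam j) ^ (-(1 - 2 * t)) * (lam i * lam j) ^ (-t)) := by
  have hC := Matrix.posSemidef_rpow_neg_add (by linarith : 0 < 1 - 2 * t) hlam
  set D := Matrix.diagonal fun i => lam i ^ (-t)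
  convert (hC.mul_mul_conjTranspose_same D).smul (by positivity : (0 : ℝ) ≤ 2 ^ (1 - 2 * t))
    using 1
  ext i j
  simp only [D, Matrix.of_apply, Matrix.smul_apply, smul_eq_mul, Matrix.mul_diagonal,
    Matrix.diagonal_mul, Matrix.conjTranspose_eq_transpose_of_trivial, Matrix.diagonal_transpose,
    mul_rpow (hlam i).le (hlam j).le]
  ring

theorem stmt_7 (t : ℝ) (ht : 0 < t) (ht1 : t < 1 / 2)
    (n : ℕ) (lam : Fin n → ℝ) (hlam : ∀ i, 0 < lam i) :
    Matrix.PosSemidef (Matrix.of fun i j : Fin n =>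
      (2 : ℝ) ^ (1 - 2 * t) * (lam i + lam j) ^ (-(1 - 2 * t)) * (lam i * lam j) ^ (-t)) :=
  stmt_7_general t ht1 n lam hlam
end

section
/- For 0 < t < 1 and all x > 0 with x ≠ 1, t(1-t)(x-1)² / ((x^t - 1)(x^{1-t} - 1)) ≥ √x. -/
/-!
Write `x = exp (2 s)` with `s ≠ 0`. Since `exp (2 y) - 1 = 2 exp y sinh y` and
`exp (t s) exp ((1 - t) s) = exp s`, the inequality becomes
`sinh (t s) sinh ((1 - t) s) ≤ t (1 - t) sinh² s`. By evenness it suffices to take `s ≥ 0`, where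
it is the product of `sinh (t s) ≤ t sinh s` and `sinh ((1 - t) s) ≤ (1 - t) sinh s`: `sinh` is
convex on `[0, ∞)` and vanishes at `0`.
-/

open Real

lemma Real.convexOn_sinh : ConvexOn ℝ (Set.Ici 0) sinh := by
  refine MonotoneOn.convexOn_of_deriv (convex_Ici 0) continuous_sinh.continuousOn
    differentiable_sinh.differentiableOn ?_
  rw [deriv_sinh, interior_Ici]
  intro a ha b hb hab
  rw [cosh_le_cosh, abs_of_pos ha, abs_of_pos hb]
  exact hab

lemma Real.sinh_mul_le_mul_sinh {t s : ℝ} (ht0 : 0 ≤ t) (ht1 : t ≤ 1) (hs : 0 ≤ s) :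
    sinh (t * s) ≤ t * sinh s := by
  simpa using convexOn_sinh.2 (Set.mem_Ici.2 hs) (Set.mem_Ici.2 le_rfl) ht0 (sub_nonneg.2 ht1)
    (add_sub_cancel t 1)

lemma Real.sinh_mul_mul_sinh_one_sub_mul_le {t : ℝ} (ht0 : 0 ≤ t) (ht1 : t ≤ 1) (s : ℝ) :
    sinh (t * s) * sinh ((1 - t) * s) ≤ t * (1 - t) * sinh s ^ 2 := by
  wlog hs : 0 ≤ s generalizing s
  · simpa [mul_neg, sinh_neg] using this (-s) (by linarith)
  have ht1' : 0 ≤ 1 - t := sub_nonneg.2 ht1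
  calc sinh (t * s) * sinh ((1 - t) * s)
      ≤ (t * sinh s) * ((1 - t) * sinh s) :=
        mul_le_mul (sinh_mul_le_mul_sinh ht0 ht1 hs)
          (sinh_mul_le_mul_sinh ht1' (by linarith) hs)
          (sinh_nonneg_iff.2 (mul_nonneg ht1' hs))
          (mul_nonneg ht0 (sinh_nonneg_iff.2 hs))
    _ = t * (1 - t) * sinh s ^ 2 := by ring

lemma Real.sinh_mul_mul_sinh_mul_pos {a b s : ℝ} (ha : 0 < a) (hb : 0 < b) (hs : s ≠ 0) :
    0 < sinh (a * s) * sinh (b * s) := by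
  rcases hs.lt_or_gt with hs | hs
  · exact mul_pos_of_neg_of_neg (sinh_neg_iff.2 (mul_neg_of_pos_of_neg ha hs))
      (sinh_neg_iff.2 (mul_neg_of_pos_of_neg hb hs))
  · exact mul_pos (sinh_pos_iff.2 (mul_pos ha hs)) (sinh_pos_iff.2 (mul_pos hb hs))

lemma Real.exp_two_mul_sub_one (y : ℝ) : exp (2 * y) - 1 = 2 * exp y * sinh y := by
  rw [sinh_eq, exp_neg, two_mul, exp_add]
  field_simp

lemma Real.exp_two_mul_rpow_sub_one (s a : ℝ) :
    exp (2 * s) ^ a - 1 = 2 * exp (a * s) * sinh (a * s) := by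
  rw [← exp_mul, ← exp_two_mul_sub_one]
  ring_nf

theorem stmt_9 (t : ℝ) (ht : 0 < t) (ht1 : t < 1) (x : ℝ) (hx : 0 < x) (hx1 : x ≠ 1) :
    Real.sqrt x ≤ t * (1 - t) * (x - 1) ^ 2 / ((x ^ t - 1) * (x ^ (1 - t) - 1)) := by
  obtain ⟨s, rfl⟩ : ∃ s, x = exp (2 * s) :=
    ⟨log x / 2, by rw [mul_div_cancel₀ _ two_ne_zero, exp_log hx]⟩
  have hs : s ≠ 0 := by rintro rfl; simp at hx1
  have hsqrt : √(exp (2 * s)) = exp s := by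
    rw [two_mul, exp_add, sqrt_mul_self (exp_pos s).le]
  have hexp : exp (t * s) * exp ((1 - t) * s) = exp s := by
    rw [← exp_add]; ring_nf
  have hP := sinh_mul_mul_sinh_mul_pos ht (sub_pos.2 ht1) hs
  have hden : (exp (2 * s) ^ t - 1) * (exp (2 * s) ^ (1 - t) - 1)
      = 4 * exp s * (sinh (t * s) * sinh ((1 - t) * s)) := by
    rw [exp_two_mul_rpow_sub_one, exp_two_mul_rpow_sub_one, ← hexp]; ring
  rw [hsqrt, hden, exp_two_mul_sub_one, le_div_iff₀ (by positivity)]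
  calc exp s * (4 * exp s * (sinh (t * s) * sinh ((1 - t) * s)))
      = 4 * exp s ^ 2 * (sinh (t * s) * sinh ((1 - t) * s)) := by ring
    _ ≤ 4 * exp s ^ 2 * (t * (1 - t) * sinh s ^ 2) :=
        mul_le_mul_of_nonneg_left (sinh_mul_mul_sinh_one_sub_mul_le ht.le ht1.le s) (by positivity)
    _ = t * (1 - t) * (2 * exp s * sinh s) ^ 2 := by ring
end

section
/- For 0 < t < 1 and all x > 0 with x ≠ 1, t(x-1)/(x^t - 1) ≥ x^{(1-t)/2}. -/
lemma convexOn_sinh_Ici : ConvexOn ℝ (Set.Ici (0:ℝ)) Real.sinh := by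
  apply convexOn_of_deriv2_nonneg (convex_Ici 0) Real.continuous_sinh.continuousOn
    Real.differentiable_sinh.differentiableOn
  · rw [Real.deriv_sinh]
    exact Real.differentiable_cosh.differentiableOn
  · intro x hx
    rw [interior_Ici] at hx
    have : deriv (deriv Real.sinh) x = Real.sinh x := by
      rw [Real.deriv_sinh, Real.deriv_cosh]
    simp only [Function.iterate_succ, Function.iterate_zero, Function.comp_apply, id_eq]
    rw [this]
    exact le_of_lt (Real.sinh_pos_iff.mpr hx)

lemma sinh_key (t v : ℝ) (ht : 0 ≤ t) (ht1 : t ≤ 1) (hv : 0 ≤ v) :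
    Real.sinh (t * v) ≤ t * Real.sinh v := by
  have h := convexOn_sinh_Ici.2 (Set.self_mem_Ici) (Set.mem_Ici.mpr hv)
    (by linarith : (0:ℝ) ≤ 1 - t) ht (by ring)
  simpa [Real.sinh_zero] using h

theorem stmt_10 (t : ℝ) (ht : 0 < t) (ht1 : t < 1) (x : ℝ) (hx : 0 < x) (hx1 : x ≠ 1) :
    x ^ ((1 - t) / 2) ≤ t * (x - 1) / (x ^ t - 1) := by
  set L := Real.log x with hL
  set a := Real.exp (L / 2) with haa
  set b := Real.exp (t * L / 2) with hbb
  have ha : 0 < a := Real.exp_pos _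
  have hb : 0 < b := Real.exp_pos _
  have hxa : x = a ^ 2 := by
    rw [haa, ← Real.exp_log hx, ← hL, sq, ← Real.exp_add]
    ring_nf
  have hxt : x ^ t = b ^ 2 := by
    rw [Real.rpow_def_of_pos hx, hbb, sq, ← Real.exp_add, ← hL]
    ring_nf
  have hx1t : x ^ ((1 - t) / 2) = a / b := by
    rw [Real.rpow_def_of_pos hx, haa, hbb, ← Real.exp_sub, ← hL]
    ring_nf
  have hsa : Real.sinh (L / 2) = (a - a⁻¹) / 2 := by
    rw [Real.sinh_eq, haa, ← Real.exp_neg]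
  have hsb : Real.sinh (t * (L / 2)) = (b - b⁻¹) / 2 := by
    rw [show t * (L / 2) = t * L / 2 by ring, Real.sinh_eq, hbb, ← Real.exp_neg]
  have hainv : a * a⁻¹ = 1 := mul_inv_cancel₀ (ne_of_gt ha)
  have hbinv : b * b⁻¹ = 1 := mul_inv_cancel₀ (ne_of_gt hb)
  rcases lt_or_gt_of_ne hx1 with hlt | hgt
  · -- x < 1, so L < 0
    have hLneg : L < 0 := Real.log_neg hx hlt
    have hxtlt : x ^ t - 1 < 0 := by
      have : x ^ t < 1 := Real.rpow_lt_one (le_of_lt hx) hlt ht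
      linarith
    rw [le_div_iff_of_neg hxtlt]
    have key := sinh_key t (-(L / 2)) (le_of_lt ht) (le_of_lt ht1) (by linarith)
    rw [show t * -(L / 2) = -(t * (L / 2)) by ring, Real.sinh_neg, Real.sinh_neg,
      hsa, hsb] at key
    -- key : -((b - b⁻¹)/2) ≤ t * -((a - a⁻¹)/2)
    rw [hxt, hx1t, hxa]
    have h2 : t * ((a - a⁻¹) / 2) ≤ (b - b⁻¹) / 2 := by linarith
    have h3 : a * (t * ((a - a⁻¹) / 2)) ≤ a * ((b - b⁻¹) / 2) := by
      exact mul_le_mul_of_nonneg_left h2 (le_of_lt ha)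
    have hdiv : a / b = a * b⁻¹ := div_eq_mul_inv a b
    nlinarith [mul_pos ha hb]
  · -- x > 1, so L > 0
    have hLpos : 0 < L := Real.log_pos hgt
    have hxtgt : 0 < x ^ t - 1 := by
      have : 1 < x ^ t := Real.one_lt_rpow_iff_of_pos hx |>.mpr (Or.inl ⟨hgt, ht⟩)
      linarith
    rw [le_div_iff₀ hxtgt]
    have key := sinh_key t (L / 2) (le_of_lt ht) (le_of_lt ht1) (by linarith)
    rw [hsa, hsb] at key
    rw [hxt, hx1t, hxa]
    have h3 : a * ((b - b⁻¹) / 2) ≤ a * (t * ((a - a⁻¹) / 2)) :=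
      mul_le_mul_of_nonneg_left key (le_of_lt ha)
    have hdiv : a / b = a * b⁻¹ := div_eq_mul_inv a b
    nlinarith [mul_pos ha hb]
end

section
/- For strictly positive reals λ₁,…,λₙ, the matrix U with entries U_ij = 1/(√λ_i + √λ_j) is positive semidefinite, and consequently the matrix T with entries T_ij = 4/(√λ_i + √λ_j)² is positive semidefinite. -/
/-!
The Cauchy matrix `1 / (bᵢ + bⱼ)` with `bᵢ > 0` is a Gram matrix in `L²(0, ∞)`, since
`1 / (bᵢ + bⱼ) = ∫₀^∞ e^{-bᵢ t} e^{-bⱼ t} dt`; so its quadratic form is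
`∫₀^∞ (∑ᵢ xᵢ e^{-bᵢ t})² dt ≥ 0`. With `bᵢ = √λᵢ` this is `U`, and `T = 4 • (U ⊙ U)` is
positive semidefinite by the Schur product theorem.
-/

open MeasureTheory Real Set Matrix

lemma one_div_eq_integral_exp_neg_mul {c : ℝ} (hc : 0 < c) :
    1 / c = ∫ t in Ioi 0, exp (-c * t) := by
  rw [integral_exp_mul_Ioi (neg_lt_zero.2 hc)]
  simp

lemma integral_sq_sum_exp_neg_mul {ι : Type*} [Fintype ι] {b : ι → ℝ} (hb : ∀ i, 0 < b i)
    (x : ι → ℝ) :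
    ∫ t in Ioi 0, (∑ i, x i * exp (-b i * t)) ^ 2 = ∑ i, ∑ j, x i * x j * (1 / (b i + b j)) := by
  have hint : ∀ i j, IntegrableOn (fun t => x i * x j * exp (-(b i + b j) * t)) (Ioi 0) :=
    fun i j => (integrableOn_exp_mul_Ioi (by linarith [hb i, hb j]) 0).const_mul _
  have hsq : ∀ t, (∑ i, x i * exp (-b i * t)) ^ 2
      = ∑ i, ∑ j, x i * x j * exp (-(b i + b j) * t) := fun t => by
    simp_rw [sq, Finset.sum_mul_sum, neg_add, add_mul, exp_add]
    exact Finset.sum_congr rfl fun i _ => Finset.sum_congr rfl fun j _ => by ring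
  simp_rw [hsq]
  rw [integral_finsetSum _ fun i _ => integrable_finsetSum _ fun j _ => hint i j]
  refine Finset.sum_congr rfl fun i _ => ?_
  rw [integral_finsetSum _ fun j _ => hint i j]
  refine Finset.sum_congr rfl fun j _ => ?_
  rw [integral_const_mul, one_div_eq_integral_exp_neg_mul (by linarith [hb i, hb j])]

theorem Matrix.posSemidef_one_div_add {ι : Type*} [Fintype ι] {b : ι → ℝ}
    (hb : ∀ i, 0 < b i) : (of fun i j => 1 / (b i + b j)).PosSemidef := by
  refine .of_dotProduct_mulVec_nonneg ?_ fun x => ?_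
  · ext i j
    simp [add_comm]
  · have hquad : star x ⬝ᵥ (of fun i j => 1 / (b i + b j)) *ᵥ x
        = ∑ i, ∑ j, x i * x j * (1 / (b i + b j)) := by
      simp only [dotProduct, mulVec, of_apply, star_trivial, Finset.mul_sum]
      exact Finset.sum_congr rfl fun i _ => Finset.sum_congr rfl fun j _ => by ring
    rw [hquad, ← integral_sq_sum_exp_neg_mul hb]
    exact setIntegral_nonneg measurableSet_Ioi fun t _ => sq_nonneg _

theorem stmt_11 (n : ℕ) (lam : Fin n → ℝ) (hlam : ∀ i, 0 < lam i) :
    Matrix.PosSemidef (Matrix.of fun i j : Fin n =>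
      1 / (Real.sqrt (lam i) + Real.sqrt (lam j))) ∧
    Matrix.PosSemidef (Matrix.of fun i j : Fin n =>
      4 / (Real.sqrt (lam i) + Real.sqrt (lam j)) ^ 2) := by
  set U : Matrix (Fin n) (Fin n) ℝ := of fun i j => 1 / (√(lam i) + √(lam j))
  have hU : U.PosSemidef := posSemidef_one_div_add fun i => sqrt_pos.2 (hlam i)
  have hT : (of fun i j : Fin n => 4 / (√(lam i) + √(lam j)) ^ 2) = (4 : ℝ) • (U ⊙ U) := by
    ext i j
    simp only [U, of_apply, Matrix.smul_apply, hadamard_apply, smul_eq_mul]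
    rw [← mul_one_div, ← _root_.one_div_pow, sq]
  exact ⟨hU, hT ▸ (hU.hadamard hU).smul (by norm_num)⟩
end

section
/- For 0 < t < 1 and strictly positive reals λ₁,…,λₙ, the matrix U^(t) with entries U_ij = (λ_i^t − λ_j^t)/(λ_i − λ_j) for λ_i ≠ λ_j and U_ii = t λ_i^{t-1} is positive semidefinite. -/
/-!
Let `c = ∫₀^∞ s^(t-1)/(s+1) ds > 0`. Scaling gives `x^t = c⁻¹ ∫₀^∞ s^(t-1) x/(x+s) ds`, and
after partial fractions `c · U_ij = ∫₀^∞ g_i g_j` with `g_i(s) = s^(t/2)/(s+λ_i)`; on the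
diagonal this is an integration by parts. So `c · U` is the Gram matrix of the `g_i` in
`L²(0, ∞)`, hence positive semidefinite.
-/

open MeasureTheory Real Set Filter Topology

lemma integrableOn_rpow_div_add_Ioi {r a : ℝ} (hr : -1 < r) (hr0 : r < 0) (ha : 0 < a) :
    IntegrableOn (fun s : ℝ => s ^ r / (s + a)) (Ioi 0) := by
  have hmeas : AEStronglyMeasurable (fun s : ℝ => s ^ r / (s + a)) volume :=
    ((measurable_id.pow_const r).div (measurable_id.add_const a)).aestronglyMeasurable
  rw [← Ioc_union_Ioi_eq_Ioi zero_le_one]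
  refine IntegrableOn.union ?_ ?_
  · refine Integrable.mono'
      (((intervalIntegral.intervalIntegrable_rpow' hr).1).const_mul a⁻¹) hmeas.restrict ?_
    filter_upwards [ae_restrict_mem measurableSet_Ioc] with s hs
    have hs0 : 0 < s := hs.1
    rw [norm_of_nonneg (by positivity), inv_mul_eq_div]
    gcongr
    linarith
  · refine Integrable.mono' (integrableOn_Ioi_rpow_of_lt (by linarith : r - 1 < -1) one_pos)
      hmeas.restrict ?_
    filter_upwards [ae_restrict_mem measurableSet_Ioi] with s (hs : 1 < s)
    rw [norm_of_nonneg (by positivity), rpow_sub_one (by positivity)]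
    gcongr
    linarith

lemma setIntegral_rpow_div_add_pos {r : ℝ} (hr : -1 < r) (hr0 : r < 0) :
    0 < ∫ s in Ioi (0:ℝ), s ^ r / (s + 1) := by
  have hpos : ∀ s ∈ Ioi (0:ℝ), 0 < s ^ r / (s + 1) := fun s (hs : 0 < s) => by positivity
  refine (setIntegral_pos_iff_support_of_nonneg_ae ?_
    (integrableOn_rpow_div_add_Ioi hr hr0 one_pos)).2 ?_
  · filter_upwards [ae_restrict_mem measurableSet_Ioi] with s hs using (hpos s hs).le
  · calc (0 : ENNReal) < volume (Ioi (0:ℝ)) := by simp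
      _ ≤ _ := measure_mono fun s hs =>
        show s ∈ Function.support _ ∩ _ from ⟨(hpos s hs).ne', hs⟩

lemma setIntegral_rpow_div_add {r a : ℝ} (ha : 0 < a) :
    ∫ s in Ioi (0:ℝ), s ^ r / (s + a) = a ^ r * ∫ s in Ioi (0:ℝ), s ^ r / (s + 1) := by
  calc ∫ s in Ioi (0:ℝ), s ^ r / (s + a)
      = a * ∫ s in Ioi (0:ℝ), (a * s) ^ r / (a * s + a) := by
        rw [integral_comp_mul_left_Ioi (fun s => s ^ r / (s + a)) 0 ha, mul_zero, smul_eq_mul,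
          mul_inv_cancel_left₀ ha.ne']
    _ = a * ∫ s in Ioi (0:ℝ), a ^ r / a * (s ^ r / (s + 1)) := by
        congr 1
        refine setIntegral_congr_fun measurableSet_Ioi fun s (hs : 0 < s) => ?_
        rw [mul_rpow ha.le hs.le]
        field_simp
    _ = a ^ r * ∫ s in Ioi (0:ℝ), s ^ r / (s + 1) := by
        rw [integral_const_mul]
        field_simp

lemma rpow_div_add_sq_le {t a s : ℝ} (ha : 0 ≤ a) (hs : 0 < s) :
    s ^ t / (s + a) ^ 2 ≤ s ^ (t - 1) / (s + a) := by
  rw [rpow_sub_one hs.ne', div_div, sq]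
  gcongr
  linarith

lemma integrableOn_rpow_div_add_sq_Ioi {t a : ℝ} (ht : 0 < t) (ht1 : t < 1) (ha : 0 < a) :
    IntegrableOn (fun s : ℝ => s ^ t / (s + a) ^ 2) (Ioi 0) := by
  have hmeas : AEStronglyMeasurable (fun s : ℝ => s ^ t / (s + a) ^ 2) volume :=
    ((measurable_id.pow_const t).div ((measurable_id.add_const a).pow_const 2)).aestronglyMeasurable
  refine Integrable.mono' (integrableOn_rpow_div_add_Ioi (r := t - 1) (by linarith) (by linarith)
    ha) hmeas.restrict ?_
  filter_upwards [ae_restrict_mem measurableSet_Ioi] with s (hs : 0 < s)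
  rw [norm_of_nonneg (by positivity)]
  exact rpow_div_add_sq_le ha.le hs

lemma tendsto_rpow_div_add_atTop {t a : ℝ} (ht1 : t < 1) (ha : 0 ≤ a) :
    Tendsto (fun u : ℝ => u ^ t / (u + a)) atTop (𝓝 0) := by
  have hdecay : Tendsto (fun u : ℝ => u ^ (t - 1)) atTop (𝓝 0) := by
    simpa using tendsto_rpow_neg_atTop (y := 1 - t) (by linarith)
  refine tendsto_of_tendsto_of_tendsto_of_le_of_le' tendsto_const_nhds hdecay ?_ ?_
  all_goals filter_upwards [eventually_gt_atTop 0] with u hu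
  · positivity
  · rw [rpow_sub_one hu.ne']
    gcongr
    linarith

/-- Integration by parts; the boundary term `u ^ t / (u + a)` vanishes at `0` and at `∞`. -/
lemma setIntegral_rpow_div_add_sq {t a : ℝ} (ht : 0 < t) (ht1 : t < 1) (ha : 0 < a) :
    ∫ s in Ioi (0:ℝ), s ^ t / (s + a) ^ 2 = t * ∫ s in Ioi (0:ℝ), s ^ (t - 1) / (s + a) := by
  have hG := (integrableOn_rpow_div_add_Ioi (r := t - 1) (by linarith) (by linarith)
    ha).const_mul t
  have hK := integrableOn_rpow_div_add_sq_Ioi ht ht1 ha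
  have hderiv : ∀ x ∈ Ioi (0:ℝ), HasDerivAt (fun u => u ^ t / (u + a))
      (t * (x ^ (t - 1) / (x + a)) - x ^ t / (x + a) ^ 2) x := by
    intro x (hx : 0 < x)
    have hxa : x + a ≠ 0 := by positivity
    refine ((hasDerivAt_rpow_const (p := t) (Or.inl hx.ne')).div
      ((hasDerivAt_id x).add_const a) hxa).congr_deriv ?_
    simp only [id]
    field_simp
  have hcont : ContinuousWithinAt (fun u : ℝ => u ^ t / (u + a)) (Ici 0) 0 :=
    ((continuousAt_rpow_const 0 t (Or.inr ht.le)).div (continuousAt_id.add continuousAt_const)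
      (by simp [ha.ne'])).continuousWithinAt
  have hFTC := integral_Ioi_of_hasDerivAt_of_tendsto hcont hderiv (hG.sub hK)
    (tendsto_rpow_div_add_atTop ht1 ha.le)
  rw [integral_sub hG hK, integral_const_mul, zero_rpow ht.ne', zero_div, sub_zero] at hFTC
  linarith

lemma memLp_rpow_half_div_add {t a : ℝ} (ht : 0 < t) (ht1 : t < 1) (ha : 0 < a) :
    MemLp (fun s : ℝ => s ^ (t / 2) / (s + a)) 2 (volume.restrict (Ioi 0)) := by
  refine (memLp_two_iff_integrable_sq
    ((measurable_id.pow_const _).div (measurable_id.add_const a)).aestronglyMeasurable).2 ?_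
  refine (integrableOn_rpow_div_add_sq_Ioi ht ht1 ha).congr_fun (fun s (hs : 0 < s) => ?_)
    measurableSet_Ioi
  simp only [Pi.div_apply, id, div_pow, ← rpow_mul_natCast hs.le]
  norm_num

lemma MeasureTheory.MemLp.inner_toLp {α : Type*} [MeasurableSpace α] {μ : Measure α}
    {f g : α → ℝ} (hf : MemLp f 2 μ) (hg : MemLp g 2 μ) :
    inner ℝ (hf.toLp f) (hg.toLp g) = ∫ x, f x * g x ∂μ := by
  rw [L2.inner_def]
  refine integral_congr_ae ?_
  filter_upwards [hf.coeFn_toLp, hg.coeFn_toLp] with x hfx hgx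
  rw [hfx, hgx, Real.inner_apply]

noncomputable def rpowDividedDifference (t a b : ℝ) : ℝ :=
  if a = b then t * a ^ (t - 1) else (a ^ t - b ^ t) / (a - b)

lemma setIntegral_rpow_half_div_add_mul {t a b : ℝ} (ht : 0 < t) (ht1 : t < 1)
    (ha : 0 < a) (hb : 0 < b) :
    ∫ s in Ioi (0:ℝ), s ^ (t / 2) / (s + a) * (s ^ (t / 2) / (s + b))
      = rpowDividedDifference t a b * ∫ s in Ioi (0:ℝ), s ^ (t - 1) / (s + 1) := by
  have hprod : ∀ s ∈ Ioi (0:ℝ), s ^ (t / 2) / (s + a) * (s ^ (t / 2) / (s + b))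
      = s ^ t / ((s + a) * (s + b)) := fun s (hs : 0 < s) => by
    rw [div_mul_div_comm, ← rpow_add hs, add_halves]
  rw [setIntegral_congr_fun measurableSet_Ioi hprod, rpowDividedDifference]
  split_ifs with hab
  · subst hab
    simp_rw [← sq]
    rw [setIntegral_rpow_div_add_sq ht ht1 ha, setIntegral_rpow_div_add ha, mul_assoc]
  · have hG : ∀ c, 0 < c → IntegrableOn (fun s : ℝ => c * (s ^ (t - 1) / (s + c))) (Ioi 0) :=
      fun c hc => (integrableOn_rpow_div_add_Ioi (by linarith) (by linarith) hc).const_mul c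
    have hpartial : ∀ s ∈ Ioi (0:ℝ), s ^ t / ((s + a) * (s + b))
        = (a - b)⁻¹ * (a * (s ^ (t - 1) / (s + a)) - b * (s ^ (t - 1) / (s + b))) :=
      fun s (hs : 0 < s) => by
        have : s + a ≠ 0 := by positivity
        have : s + b ≠ 0 := by positivity
        rw [rpow_sub_one hs.ne']
        field_simp
        ring
    rw [setIntegral_congr_fun measurableSet_Ioi hpartial, integral_const_mul,
      integral_sub (hG a ha) (hG b hb), integral_const_mul, integral_const_mul,
      setIntegral_rpow_div_add ha, setIntegral_rpow_div_add hb, rpow_sub_one ha.ne',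
      rpow_sub_one hb.ne']
    field_simp

theorem stmt_12 (t : ℝ) (ht : 0 < t) (ht1 : t < 1)
    (n : ℕ) (lam : Fin n → ℝ) (hlam : ∀ i, 0 < lam i) :
    Matrix.PosSemidef (Matrix.of fun i j : Fin n =>
      if lam i = lam j then t * lam i ^ (t - 1)
      else (lam i ^ t - lam j ^ t) / (lam i - lam j)) := by
  set I := ∫ s in Ioi (0:ℝ), s ^ (t - 1) / (s + 1) with hI_def
  have hI : 0 < I := setIntegral_rpow_div_add_pos (by linarith) (by linarith)
  have hmem i := memLp_rpow_half_div_add ht ht1 (hlam i)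
  have hgram : (Matrix.of fun i j => rpowDividedDifference t (lam i) (lam j))
      = I⁻¹ • Matrix.gram ℝ fun i => (hmem i).toLp _ := by
    ext i j
    rw [Matrix.smul_apply, Matrix.gram_apply, MemLp.inner_toLp,
      setIntegral_rpow_half_div_add_mul ht ht1 (hlam i) (hlam j), Matrix.of_apply, smul_eq_mul,
      ← hI_def, inv_mul_eq_div, mul_div_cancel_right₀ _ hI.ne']
  exact hgram ▸ (Matrix.posSemidef_gram ℝ _).smul (inv_nonneg.2 hI.le)
end

section
/- For 0 < t < 1 and strictly positive reals λ₁,…,λₙ, the matrix T with entries T_ij = t(1-t) · (λ_i^t − λ_j^t)/(λ_i − λ_j) · (λ_i^{1-t} − λ_j^{1-t})/(λ_i − λ_j) (with diagonal entries defined by continuity as t(1-t) t λ_i^{t-1} (1-t) λ_i^{-t}) is positive semidefinite. -/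
/-!
For `0 < p < 1` Mathlib represents `x ^ p` as `C⁻¹ * ∫₀^∞ t ^ p * (t⁻¹ - (t + x)⁻¹) dt` with
`C > 0`. Taking divided differences under the integral, the Löwner matrix of `x ↦ x ^ p` at
`λ₁, …, λₙ > 0` becomes `C⁻¹ * ∫₀^∞ t ^ p * v_t v_tᵀ dt` with `v_t = ((t + λᵢ)⁻¹)ᵢ`, a positive
combination of rank-one positive semidefinite matrices; the diagonal entries follow by letting
`λⱼ → λᵢ`. The matrix `T` is `t (1 - t)` times the Hadamard product of the Löwner matrices for
`p = t` and `p = 1 - t`, so the Schur product theorem finishes the proof.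
-/

open MeasureTheory Set Filter Topology Real
open scoped Matrix

theorem Matrix.posSemidef_of_integral_mul_mul {α ι : Type*} [MeasurableSpace α] [Fintype ι]
    {μ : Measure α} {w : α → ℝ} {v : ι → α → ℝ} (hw : ∀ᵐ x ∂μ, 0 ≤ w x)
    (hint : ∀ i j, Integrable (fun x ↦ w x * (v i x * v j x)) μ) :
    (Matrix.of fun i j ↦ ∫ x, w x * (v i x * v j x) ∂μ).PosSemidef := by
  refine .of_dotProduct_mulVec_nonneg ?_ fun c ↦ ?_
  · ext i j
    simp only [Matrix.conjTranspose_apply, Matrix.of_apply, star_trivial, mul_comm (v i _)]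
  calc (0 : ℝ) ≤ ∫ x, w x * (∑ i, c i * v i x) ^ 2 ∂μ :=
        integral_nonneg_of_ae (hw.mono fun x hx ↦ mul_nonneg hx (sq_nonneg _))
    _ = ∫ x, ∑ i, ∑ j, c i * c j * (w x * (v i x * v j x)) ∂μ := by
        congr 1 with x
        rw [sq, Finset.sum_mul_sum, Finset.mul_sum]
        refine Finset.sum_congr rfl fun i _ ↦ ?_
        rw [Finset.mul_sum]
        exact Finset.sum_congr rfl fun j _ ↦ by ring
    _ = _ := by
        rw [integral_finsetSum _ fun i _ ↦ integrable_finsetSum _ fun j _ ↦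
          (hint i j).const_mul _]
        simp only [dotProduct, Matrix.mulVec, Matrix.of_apply, star_trivial, Finset.mul_sum]
        refine Finset.sum_congr rfl fun i _ ↦ ?_
        rw [integral_finsetSum _ fun j _ ↦ (hint i j).const_mul _]
        refine Finset.sum_congr rfl fun j _ ↦ ?_
        rw [integral_const_mul]
        ring

namespace Real

noncomputable def rpowKernel (p a b : ℝ) : ℝ := ∫ t in Ioi 0, t ^ p * ((t + a)⁻¹ * (t + b)⁻¹)

variable {p a b : ℝ}

lemma rpowIntegrand₀₁_sub_rpowIntegrand₀₁ {t : ℝ} (ha : t + a ≠ 0) (hb : t + b ≠ 0) :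
    rpowIntegrand₀₁ p t b - rpowIntegrand₀₁ p t a =
      (b - a) * (t ^ p * ((t + a)⁻¹ * (t + b)⁻¹)) := by
  unfold rpowIntegrand₀₁
  field_simp
  ring

lemma integrableOn_rpow_mul_inv_mul_inv_of_ne (hp : p ∈ Ioo 0 1) (ha : 0 < a) (hb : 0 < b)
    (hab : a ≠ b) : IntegrableOn (fun t ↦ t ^ p * ((t + a)⁻¹ * (t + b)⁻¹)) (Ioi 0) := by
  refine IntegrableOn.congr_fun (((integrableOn_rpowIntegrand₀₁_Ioi hp hb.le).sub
    (integrableOn_rpowIntegrand₀₁_Ioi hp ha.le)).const_mul (b - a)⁻¹)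
    (fun t (ht : 0 < t) ↦ ?_) measurableSet_Ioi
  rw [Pi.sub_apply, rpowIntegrand₀₁_sub_rpowIntegrand₀₁ (by positivity) (by positivity),
    inv_mul_cancel_left₀ (sub_ne_zero.2 hab.symm)]

lemma integrableOn_rpow_mul_inv_mul_inv (hp : p ∈ Ioo 0 1) (ha : 0 < a) (hb : 0 < b) :
    IntegrableOn (fun t ↦ t ^ p * ((t + a)⁻¹ * (t + b)⁻¹)) (Ioi 0) := by
  rcases ne_or_eq a b with hab | rfl
  · exact integrableOn_rpow_mul_inv_mul_inv_of_ne hp ha hb hab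
  refine (integrableOn_rpow_mul_inv_mul_inv_of_ne hp ha (half_pos ha) (by linarith)).mono'
    (by fun_prop) ?_
  filter_upwards [ae_restrict_mem measurableSet_Ioi] with t (ht : 0 < t)
  rw [norm_of_nonneg (by positivity)]
  gcongr; linarith

lemma integral_rpowIntegrand₀₁_one_mul_slope (hp : p ∈ Ioo 0 1) (ha : 0 < a) (hb : 0 < b)
    (hab : a ≠ b) :
    (∫ t in Ioi 0, rpowIntegrand₀₁ p t 1) * ((a ^ p - b ^ p) / (a - b)) = rpowKernel p a b := by
  have hdiff : ∫ t in Ioi 0, rpowIntegrand₀₁ p t a - rpowIntegrand₀₁ p t b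
      = (a - b) * rpowKernel p a b := by
    rw [rpowKernel, ← integral_const_mul]
    refine setIntegral_congr_fun measurableSet_Ioi fun t (ht : 0 < t) ↦ ?_
    rw [rpowIntegrand₀₁_sub_rpowIntegrand₀₁ (by positivity) (by positivity), mul_comm (t + b)⁻¹]
  rw [integral_sub (integrableOn_rpowIntegrand₀₁_Ioi hp ha.le)
      (integrableOn_rpowIntegrand₀₁_Ioi hp hb.le),
    integral_rpowIntegrand₀₁_eq_rpow_mul_const hp ha.le,
    integral_rpowIntegrand₀₁_eq_rpow_mul_const hp hb.le] at hdiff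
  rw [eq_comm, ← mul_div_cancel_left₀ (rpowKernel p a b) (sub_ne_zero.2 hab), ← hdiff]
  ring

lemma continuousAt_rpowKernel (hp : p ∈ Ioo 0 1) (ha : 0 < a) :
    ContinuousAt (rpowKernel p a) a := by
  refine continuousAt_of_dominated (bound := fun t ↦ t ^ p * ((t + a)⁻¹ * (t + a / 2)⁻¹))
    (.of_forall fun b ↦ by fun_prop) ?_
    (integrableOn_rpow_mul_inv_mul_inv hp ha (half_pos ha)) ?_
  · filter_upwards [lt_mem_nhds (half_lt_self ha)] with b hb
    filter_upwards [ae_restrict_mem measurableSet_Ioi] with t (ht : 0 < t)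
    have : 0 < t + b := by linarith
    rw [norm_of_nonneg (by positivity)]
    gcongr
  · filter_upwards [ae_restrict_mem measurableSet_Ioi] with t (ht : 0 < t)
    have : t + a ≠ 0 := by positivity
    fun_prop (disch := assumption)

/-- The slopes of `x ↦ x ^ p` at `a` are `C⁻¹ * rpowKernel p a b` by the off-diagonal case; they
tend to the derivative `p * a ^ (p - 1)` and, by continuity, to `C⁻¹ * rpowKernel p a a`. -/
lemma integral_rpowIntegrand₀₁_one_mul_deriv (hp : p ∈ Ioo 0 1) (ha : 0 < a) :
    (∫ t in Ioi 0, rpowIntegrand₀₁ p t 1) * (p * a ^ (p - 1)) = rpowKernel p a a := by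
  set C := ∫ t in Ioi 0, rpowIntegrand₀₁ p t 1
  have hC : C ≠ 0 := (integral_rpowIntegrand₀₁_one_pos hp).ne'
  have hslope : slope (· ^ p) a =ᶠ[𝓝[≠] a] fun b ↦ C⁻¹ * rpowKernel p a b := by
    filter_upwards [self_mem_nhdsWithin, nhdsWithin_le_nhds (lt_mem_nhds ha)] with b hba hb
    rw [← integral_rpowIntegrand₀₁_one_mul_slope hp ha hb (Ne.symm hba), inv_mul_cancel_left₀ hC,
      slope_def_field, ← neg_div_neg_eq, neg_sub, neg_sub]
  have hderiv := hasDerivAt_iff_tendsto_slope.1 (hasDerivAt_rpow_const (p := p) (Or.inl ha.ne'))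
  have hcont := ((continuousAt_rpowKernel hp ha).const_mul C⁻¹).tendsto.mono_left
    (nhdsWithin_le_nhds (s := {a}ᶜ))
  rw [tendsto_nhds_unique (hderiv.congr' hslope) hcont, mul_inv_cancel_left₀ hC]

end Real

noncomputable def loewnerMatrix {ι : Type*} (f : ℝ → ℝ) (lam : ι → ℝ) : Matrix ι ι ℝ :=
  Matrix.of fun i j ↦
    if lam i = lam j then deriv f (lam i) else (f (lam i) - f (lam j)) / (lam i - lam j)

theorem loewnerMatrix_rpow_eq_smul {ι : Type*} {p : ℝ} {lam : ι → ℝ} (hp : p ∈ Ioo 0 1)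
    (hlam : ∀ i, 0 < lam i) :
    loewnerMatrix (· ^ p) lam =
      (∫ t in Ioi 0, rpowIntegrand₀₁ p t 1)⁻¹ •
        Matrix.of fun i j ↦ rpowKernel p (lam i) (lam j) := by
  have hC := (integral_rpowIntegrand₀₁_one_pos hp).ne'
  ext i j
  simp only [loewnerMatrix, Matrix.of_apply, Matrix.smul_apply, smul_eq_mul, Real.deriv_rpow_const]
  split_ifs with h
  · rw [← h, ← integral_rpowIntegrand₀₁_one_mul_deriv hp (hlam i), inv_mul_cancel_left₀ hC]
  · rw [← integral_rpowIntegrand₀₁_one_mul_slope hp (hlam i) (hlam j) h, inv_mul_cancel_left₀ hC]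

theorem posSemidef_loewnerMatrix_rpow {ι : Type*} [Fintype ι] {p : ℝ} {lam : ι → ℝ}
    (hp : p ∈ Ioo 0 1) (hlam : ∀ i, 0 < lam i) : (loewnerMatrix (· ^ p) lam).PosSemidef := by
  rw [loewnerMatrix_rpow_eq_smul hp hlam]
  refine Matrix.PosSemidef.smul ?_ (inv_nonneg.2 (integral_rpowIntegrand₀₁_one_pos hp).le)
  exact Matrix.posSemidef_of_integral_mul_mul (v := fun i t ↦ (t + lam i)⁻¹)
    (ae_restrict_of_forall_mem measurableSet_Ioi fun t ht ↦ rpow_nonneg (le_of_lt ht) p)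
    fun i j ↦ integrableOn_rpow_mul_inv_mul_inv hp (hlam i) (hlam j)

theorem stmt_13 (t : ℝ) (ht : 0 < t) (ht1 : t < 1)
    (n : ℕ) (lam : Fin n → ℝ) (hlam : ∀ i, 0 < lam i) :
    Matrix.PosSemidef (Matrix.of fun i j : Fin n =>
      if lam i = lam j then
        t * (1 - t) * (t * lam i ^ (t - 1)) * ((1 - t) * lam i ^ (-t))
      else
        t * (1 - t) * ((lam i ^ t - lam j ^ t) / (lam i - lam j)) *
          ((lam i ^ (1 - t) - lam j ^ (1 - t)) / (lam i - lam j))) := by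
  have hT := ((posSemidef_loewnerMatrix_rpow ⟨ht, ht1⟩ hlam).hadamard
    (posSemidef_loewnerMatrix_rpow (p := 1 - t) ⟨by linarith, by linarith⟩ hlam)).smul
    (mul_nonneg ht.le (sub_nonneg.2 ht1.le))
  refine Eq.subst (motive := Matrix.PosSemidef) ?_ hT
  ext i j
  simp only [loewnerMatrix, Matrix.smul_apply, Matrix.hadamard_apply, Matrix.of_apply,
    Real.deriv_rpow_const, smul_eq_mul, sub_sub_cancel_left]
  split_ifs <;> ring
end

section
/- For fixed x > 0, the function t ↦ f_t(x) = ((t-1)/t) · (x^t − 1)/(x^{t-1} − 1) is monotone increasing in t on [-1, 2] (interpreting removable singularities by continuity). -/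
/-!
Writing `x = exp c`, `powerDiff x t = E (t c) / E ((t - 1) c)` where `E a = ∫₀¹ exp (a s) ds`
(this also covers all the removable singularities). For `t₁ ≤ t₂`, monotonicity amounts to
`E (t₁ c) E ((t₂ - 1) c) ≤ E (t₂ c) E ((t₁ - 1) c)`: both products have the same `a + b`, and the
second has the larger `|a - b|`. Symmetrizing `E a E b = ∫∫ exp (a s + b u)` in `(s, u)` reduces this
to `exp r + exp s ≤ exp p + exp q` for `p + q = r + s`, `|r - s| ≤ |p - q|`, i.e. monotonicity of
`cosh`.
-/

/-- The power difference mean function `t ↦ ((t-1)/t)·(x^t − 1)/(x^{t-1} − 1)`,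
with removable singularities (at `x = 1`, `t = 0` and `t = 1`) filled in by continuity. -/
noncomputable def powerDiff (x t : ℝ) : ℝ :=
  if x = 1 then 1
  else if t = 0 then x * Real.log x / (x - 1)
  else if t = 1 then (x - 1) / Real.log x
  else ((t - 1) / t) * (x ^ t - 1) / (x ^ (t - 1) - 1)

open Real intervalIntegral

lemma exp_add_exp_le_of_add_eq_of_abs_sub_le {p q r s : ℝ} (hsum : p + q = r + s)
    (habs : |r - s| ≤ |p - q|) : exp r + exp s ≤ exp p + exp q := by
  have exp_add_exp : ∀ u v : ℝ, exp u + exp v = 2 * exp ((u + v) / 2) * cosh ((u - v) / 2) := by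
    intro u v
    rw [cosh_eq, mul_assoc, mul_div_assoc', mul_add, ← exp_add, ← exp_add]
    ring_nf
  rw [exp_add_exp, exp_add_exp, hsum]
  gcongr
  rw [cosh_le_cosh, abs_div, abs_div]
  gcongr

noncomputable def expAvg (a : ℝ) : ℝ := ∫ s in (0 : ℝ)..1, exp (a * s)

lemma intervalIntegrable_exp_mul (a c d : ℝ) :
    IntervalIntegrable (fun s => exp (a * s)) MeasureTheory.volume c d :=
  (by fun_prop : Continuous fun s => exp (a * s)).intervalIntegrable c d

lemma expAvg_pos (a : ℝ) : 0 < expAvg a :=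
  intervalIntegral_pos_of_pos (intervalIntegrable_exp_mul a 0 1) (fun _ => exp_pos _) one_pos

@[simp]
lemma expAvg_zero : expAvg 0 = 1 := by
  simp [expAvg]

lemma expAvg_of_ne_zero {a : ℝ} (ha : a ≠ 0) : expAvg a = (exp a - 1) / a := by
  simp_rw [expAvg, mul_comm a, integral_comp_mul_right exp ha]
  simp [div_eq_inv_mul]

lemma exp_mul_expAvg_add_exp_mul_expAvg (a b s : ℝ) :
    exp (a * s) * expAvg b + exp (b * s) * expAvg a =
      ∫ u in (0 : ℝ)..1, (exp (a * s + b * u) + exp (b * s + a * u)) := by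
  simp only [exp_add]
  rw [integral_add (by apply Continuous.intervalIntegrable; fun_prop)
    (by apply Continuous.intervalIntegrable; fun_prop), integral_const_mul, integral_const_mul]
  rfl

lemma two_mul_expAvg_mul_expAvg (a b : ℝ) :
    2 * (expAvg a * expAvg b) =
      ∫ s in (0 : ℝ)..1, (exp (a * s) * expAvg b + exp (b * s) * expAvg a) := by
  rw [integral_add ((intervalIntegrable_exp_mul a 0 1).mul_const _)
    ((intervalIntegrable_exp_mul b 0 1).mul_const _), integral_mul_const, integral_mul_const,
    expAvg, expAvg]
  ring

lemma expAvg_mul_expAvg_le {a b a' b' : ℝ} (hsum : a + b = a' + b') (habs : |a - b| ≤ |a' - b'|) :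
    expAvg a * expAvg b ≤ expAvg a' * expAvg b' := by
  suffices 2 * (expAvg a * expAvg b) ≤ 2 * (expAvg a' * expAvg b') by linarith
  rw [two_mul_expAvg_mul_expAvg, two_mul_expAvg_mul_expAvg]
  refine integral_mono_on zero_le_one (by apply Continuous.intervalIntegrable; fun_prop)
    (by apply Continuous.intervalIntegrable; fun_prop) fun s _ => ?_
  rw [exp_mul_expAvg_add_exp_mul_expAvg, exp_mul_expAvg_add_exp_mul_expAvg]
  refine integral_mono_on zero_le_one (by apply Continuous.intervalIntegrable; fun_prop)
    (by apply Continuous.intervalIntegrable; fun_prop) fun u _ => ?_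
  apply exp_add_exp_le_of_add_eq_of_abs_sub_le
  · linear_combination (s + u) * hsum.symm
  · rw [show a * s + b * u - (b * s + a * u) = (a - b) * (s - u) by ring,
      show a' * s + b' * u - (b' * s + a' * u) = (a' - b') * (s - u) by ring, abs_mul, abs_mul]
    gcongr

lemma powerDiff_eq_expAvg_div_expAvg {x : ℝ} (hx : 0 < x) (t : ℝ) :
    powerDiff x t = expAvg (t * log x) / expAvg ((t - 1) * log x) := by
  by_cases h1 : x = 1
  · simp [powerDiff, h1]
  have hlog : log x ≠ 0 := log_ne_zero_of_pos_of_ne_one hx h1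
  rw [powerDiff, if_neg h1]
  split_ifs with h0 ht1
  · have hx1 : x - 1 ≠ 0 := sub_ne_zero.mpr h1
    rw [h0, zero_mul, expAvg_zero, expAvg_of_ne_zero (by simpa using hlog),
      show (0 - 1) * log x = -log x by ring, exp_neg, exp_log hx]
    field_simp
    ring
  · rw [ht1, one_mul, sub_self, zero_mul, expAvg_zero, div_one, expAvg_of_ne_zero hlog, exp_log hx]
  · have hc : t * log x ≠ 0 := mul_ne_zero h0 hlog
    have hc' : (t - 1) * log x ≠ 0 := mul_ne_zero (sub_ne_zero.mpr ht1) hlog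
    have hpow (u : ℝ) : x ^ u = exp (u * log x) := by rw [rpow_def_of_pos hx, mul_comm]
    have hden : exp ((t - 1) * log x) - 1 ≠ 0 := by rwa [sub_ne_zero, Ne, exp_eq_one_iff]
    have ht1' : t - 1 ≠ 0 := sub_ne_zero.mpr ht1
    rw [expAvg_of_ne_zero hc, expAvg_of_ne_zero hc', hpow, hpow]
    field_simp

theorem monotone_powerDiff {x : ℝ} (hx : 0 < x) : Monotone (powerDiff x) := by
  intro t₁ t₂ h
  rw [powerDiff_eq_expAvg_div_expAvg hx, powerDiff_eq_expAvg_div_expAvg hx,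
    div_le_div_iff₀ (expAvg_pos _) (expAvg_pos _)]
  apply expAvg_mul_expAvg_le (by ring)
  rw [← sub_mul, ← sub_mul, abs_mul, abs_mul]
  refine mul_le_mul_of_nonneg_right ?_ (abs_nonneg _)
  rw [abs_le, abs_of_nonneg (by linarith)]
  constructor <;> linarith

theorem stmt_14 (x : ℝ) (hx : 0 < x) :
    MonotoneOn (fun t => powerDiff x t) (Set.Icc (-1 : ℝ) 2) :=
  (monotone_powerDiff hx).monotoneOn _
end

section
/- For 0 ≤ t ≤ 1, the function f_t(x) = 2(tx+1)(t+x)/((1+t)²(x+1)) satisfies f_t(x) ≥ √x for all x > 0 if and only if 3 − 2√2 ≤ t. -/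
/-!
Write `x = y²` with `y > 0`. Then `f_t(y²) - y` factors as `(y - 1)²` times the quadratic
`q_t(y) = 2 t y² - (1 - t)² y + 2 t` over a positive denominator, and
`q_t(y) = 2 t (y - 1)² + (4 t - (1 - t)²) y`. So `f_t(x) ≥ √x` for all `x > 0` exactly when
`(1 - t)² ≤ 4 t`, which for `0 ≤ t ≤ 1` is `3 - 2√2 ≤ t`.
-/

/-- The function `f_t`. -/
noncomputable def interpMean (t x : ℝ) : ℝ :=
  2 * (t * x + 1) * (t + x) / ((1 + t) ^ 2 * (x + 1))

/-- The quadratic `q_t`. -/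
def interpQuad (t y : ℝ) : ℝ :=
  2 * t * y ^ 2 - (1 - t) ^ 2 * y + 2 * t

lemma interpMean_sq_sub_self {t : ℝ} (ht : 0 ≤ t) (y : ℝ) :
    interpMean t (y ^ 2) - y = (y - 1) ^ 2 * interpQuad t y / ((1 + t) ^ 2 * (y ^ 2 + 1)) := by
  unfold interpMean interpQuad
  field_simp
  ring

lemma le_interpMean_sq_iff {t : ℝ} (ht : 0 ≤ t) (y : ℝ) :
    y ≤ interpMean t (y ^ 2) ↔ 0 ≤ (y - 1) ^ 2 * interpQuad t y := by
  rw [← sub_nonneg, interpMean_sq_sub_self ht, le_div_iff₀ (by positivity), zero_mul]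

lemma interpQuad_nonneg {t y : ℝ} (ht : 0 ≤ t) (hdisc : (1 - t) ^ 2 ≤ 4 * t) (hy : 0 ≤ y) :
    0 ≤ interpQuad t y := by
  have hsplit : interpQuad t y = 2 * t * (y - 1) ^ 2 + (4 * t - (1 - t) ^ 2) * y := by
    unfold interpQuad
    ring
  rw [hsplit]
  exact add_nonneg (by positivity) (mul_nonneg (sub_nonneg.mpr hdisc) hy)

lemma exists_one_lt_interpQuad_neg {t : ℝ} (ht : 0 ≤ t) (hdisc : 4 * t < (1 - t) ^ 2) :
    ∃ y, 1 < y ∧ interpQuad t y < 0 := by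
  -- With `d = (1 - t)² - 4t` and `s (2t + 1) = d`, `q_t(1 + s) = 2ts² - d(1 + s)` and
  -- `2ts² < ds`; the minimiser `(1 - t)² / (4t)` would need `t ≠ 0`.
  set d := (1 - t) ^ 2 - 4 * t
  set s := d / (2 * t + 1)
  have hs : 0 < s := div_pos (by linarith) (by linarith)
  have hsd : s * (2 * t + 1) = d := div_mul_cancel₀ d (by linarith)
  refine ⟨1 + s, by linarith, ?_⟩
  unfold interpQuad
  nlinarith

lemma three_sub_two_sqrt_two_le_iff {t : ℝ} (ht : t ≤ 1) :
    3 - 2 * √2 ≤ t ↔ (1 - t) ^ 2 ≤ 4 * t := by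
  have hsq : √2 ^ 2 = 2 := Real.sq_sqrt zero_le_two
  have hpos : 0 < √2 := by positivity
  constructor
  · intro h
    nlinarith [sq_nonneg (√2 - 1)]
  · intro h
    nlinarith [sq_nonneg (t - 3 + 2 * √2)]

theorem stmt_17 (t : ℝ) (ht0 : 0 ≤ t) (ht1 : t ≤ 1) :
    (∀ x : ℝ, 0 < x →
        Real.sqrt x ≤ 2 * (t * x + 1) * (t + x) / ((1 + t) ^ 2 * (x + 1))) ↔
      3 - 2 * Real.sqrt 2 ≤ t := by
  rw [three_sub_two_sqrt_two_le_iff ht1]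
  constructor
  · intro h
    by_contra! hdisc
    obtain ⟨y, hy1, hq⟩ := exists_one_lt_interpQuad_neg ht0 hdisc
    have hle : y ≤ interpMean t (y ^ 2) := by
      have := h (y ^ 2) (by positivity)
      rwa [Real.sqrt_sq (by linarith)] at this
    rw [le_interpMean_sq_iff ht0] at hle
    exact hle.not_gt (mul_neg_of_pos_of_neg (pow_pos (sub_pos.mpr hy1) 2) hq)
  · intro hdisc x hx
    have hx' : x = √x ^ 2 := (Real.sq_sqrt hx.le).symm
    have : √x ≤ interpMean t (√x ^ 2) :=
      (le_interpMean_sq_iff ht0 _).mpr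
        (mul_nonneg (sq_nonneg _) (interpQuad_nonneg ht0 hdisc (Real.sqrt_nonneg x)))
    rwa [← hx'] at this
end
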